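/- Let G = (A ∪ H, E) be a House Allocation with Ties (HAT) instance with first-choice graph G₁ = (A ∪ H, E₁), and for each agent a let s(a) be the set of a's most-preferred houses among the even houses of the Gallai–Edmonds decomposition of G₁. Then a matching M of G is popular if and only if (1) M ∩ E₁ is a maximum matching of G₁, and (2) every agent a is matched in M and M(a) ∈ f(a) ∪ s(a). -/

import Mathlib

/-- A House Allocation with Ties (HAT) instance: agents `A`, houses `H`, an adjacency
relation (each agent ranks the adjacent houses; lower rank means more preferred, ties
allowed), together with a unique last-resort house `l(a)` for each agent `a`, which is
strictly the least preferred house of `a` and appears only on `a`'s list. -/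
structure HATInstance (A H : Type*) where
  adj : A → H → Prop
  rank : A → H → ℕ
  lastResort : A → H
  lastResort_injective : Function.Injective lastResort
  lastResort_adj : ∀ a, adj a (lastResort a)
  lastResort_worst : ∀ a h, adj a h → h ≠ lastResort a → rank a h < rank a (lastResort a)
  lastResort_only : ∀ a a', adj a' (lastResort a) → a' = a

namespace HATInstance

variable {A H : Type*}

/-- The edge set of the bipartite graph `G = (A ∪ H, E)` of the instance. -/
def edgeSet (I : HATInstance A H) : Set (A × H) := {p | I.adj p.1 p.2}

/-- `M` is a matching contained in the edge set `E`: every agent is in at most one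
edge of `M` and every house is in at most one edge of `M`. -/
def IsMatchingIn (E M : Set (A × H)) : Prop :=
  M ⊆ E ∧ (∀ p ∈ M, ∀ q ∈ M, p.1 = q.1 → p = q) ∧ (∀ p ∈ M, ∀ q ∈ M, p.2 = q.2 → p = q)

/-- A maximum (cardinality) matching contained in the edge set `E`. -/
def IsMaxMatchingIn (E M : Set (A × H)) : Prop :=
  IsMatchingIn E M ∧ ∀ N : Set (A × H), IsMatchingIn E N → N.ncard ≤ M.ncard

/-- A matching of the instance `I`. -/
def IsMatching (I : HATInstance A H) (M : Set (A × H)) : Prop :=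
  IsMatchingIn I.edgeSet M

/-- Agent `a` prefers matching `M` to matching `M'`: `a` is matched in `M` and either
unmatched in `M'`, or strictly prefers its house in `M` to its house in `M'`. -/
def Prefers (I : HATInstance A H) (M M' : Set (A × H)) (a : A) : Prop :=
  ∃ h, (a, h) ∈ M ∧ ∀ h', (a, h') ∈ M' → I.rank a h < I.rank a h'

/-- `M` is more popular than `M'`. -/
def MorePopular [Fintype A] (I : HATInstance A H) (M M' : Set (A × H)) : Prop :=
  Nat.card {a | Prefers I M M' a} > Nat.card {a | Prefers I M' M a}

/-- `M` is a popular matching of `I`: it is a matching and no matching is more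
popular than it. -/
def IsPopular [Fintype A] (I : HATInstance A H) (M : Set (A × H)) : Prop :=
  I.IsMatching M ∧ ∀ M', I.IsMatching M' → ¬ MorePopular I M' M

/-- `f(a)`: the set of top-ranked (first-choice) houses of agent `a`. -/
def firstChoices (I : HATInstance A H) (a : A) : Set H :=
  {h | I.adj a h ∧ ∀ h', I.adj a h' → I.rank a h ≤ I.rank a h'}

/-- The edge set `E₁` of the first-choice graph `G₁`. -/
def firstChoiceEdges (I : HATInstance A H) : Set (A × H) :=
  {p | p.2 ∈ I.firstChoices p.1}

end HATInstance

/-- `M` is a matching of the graph `G`: a set of edges of `G` in which every vertex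
lies in at most one edge. -/
def IsGraphMatching {V : Type*} (G : SimpleGraph V) (M : Set (Sym2 V)) : Prop :=
  M ⊆ G.edgeSet ∧ ∀ e ∈ M, ∀ e' ∈ M, ∀ v : V, v ∈ e → v ∈ e' → e = e'

/-- A maximum (cardinality) matching of `G`. -/
def IsMaximumMatching {V : Type*} (G : SimpleGraph V) (M : Set (Sym2 V)) : Prop :=
  IsGraphMatching G M ∧ ∀ N : Set (Sym2 V), IsGraphMatching G N → N.ncard ≤ M.ncard

/-- A vertex is unmatched by `M` if it lies in no edge of `M`. -/
def UnmatchedVtx {V : Type*} (M : Set (Sym2 V)) (v : V) : Prop := ∀ e ∈ M, v ∉ e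

/-- A walk is alternating with respect to the matching `M` (as a walk starting at an
unmatched vertex) if its edges alternately avoid and belong to `M`, starting with an
edge not in `M`. -/
def IsAlternatingWalk {V : Type*} {G : SimpleGraph V} {u v : V} (M : Set (Sym2 V))
    (p : G.Walk u v) : Prop :=
  ∀ (i : ℕ) (h : i < p.edges.length), (p.edges.get ⟨i, h⟩ ∈ M ↔ i % 2 = 1)

/-- `v` is an even vertex: there is an even-length alternating path from some
`M`-unmatched vertex to `v`. -/
def EvenVtx {V : Type*} (G : SimpleGraph V) (M : Set (Sym2 V)) (v : V) : Prop :=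
  ∃ u, UnmatchedVtx M u ∧ ∃ p : G.Walk u v, p.IsPath ∧ IsAlternatingWalk M p ∧ Even p.length

/-- `v` is an odd vertex: there is an odd-length alternating path from some
`M`-unmatched vertex to `v`. -/
def OddVtx {V : Type*} (G : SimpleGraph V) (M : Set (Sym2 V)) (v : V) : Prop :=
  ∃ u, UnmatchedVtx M u ∧ ∃ p : G.Walk u v, p.IsPath ∧ IsAlternatingWalk M p ∧ Odd p.length

/-- `v` is unreachable: no alternating path from an `M`-unmatched vertex reaches `v`. -/
def UnreachableVtx {V : Type*} (G : SimpleGraph V) (M : Set (Sym2 V)) (v : V) : Prop :=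
  ¬ ∃ u, UnmatchedVtx M u ∧ ∃ p : G.Walk u v, p.IsPath ∧ IsAlternatingWalk M p

/-- `G` is bipartite. -/
def IsBipartite {V : Type*} (G : SimpleGraph V) : Prop :=
  ∃ s : Set V, ∀ ⦃u v : V⦄, G.Adj u v → (u ∈ s ↔ v ∉ s)

namespace HATInstance

variable {A H : Type*}

/-- The first-choice graph `G₁ = (A ∪ H, E₁)` of the instance, as a simple graph on
the vertex set `A ⊕ H`. -/
def G1 (I : HATInstance A H) : SimpleGraph (A ⊕ H) :=
  SimpleGraph.fromRel (fun x y => ∃ a hs, x = Sum.inl a ∧ y = Sum.inr hs ∧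
    hs ∈ I.firstChoices a)

/-- A matching given as a set of (agent, house) pairs, viewed as a set of edges of a
graph on `A ⊕ H`. -/
def sym2Edges (M : Set (A × H)) : Set (Sym2 (A ⊕ H)) :=
  {e | ∃ p ∈ M, e = s(Sum.inl p.1, Sum.inr p.2)}

/-- A house is even when it is an even vertex of the first-choice graph `G₁` with
respect to (the `Sym2` version of) the maximum matching `M₁` of `G₁`. -/
def EvenHouse (I : HATInstance A H) (M₁ : Set (A × H)) (h : H) : Prop :=
  EvenVtx I.G1 (sym2Edges M₁) (Sum.inr h)

/-- `s(a)`: the set of most preferred houses of agent `a` among the even houses of the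
Gallai–Edmonds decomposition of `G₁`. -/
def sChoices (I : HATInstance A H) (M₁ : Set (A × H)) (a : A) : Set H :=
  {h | I.adj a h ∧ EvenHouse I M₁ h ∧
    ∀ h', I.adj a h' → EvenHouse I M₁ h' → I.rank a h ≤ I.rank a h'}

end HATInstance

/-!
Write `R = M ∩ E₁` and call a house `R`-even when an `R`-alternating path leads down from it to an
`R`-exposed house. Evenness is the same for every maximum matching of `G₁`: flipping such a path
exposes the house in another maximum matching, and conversely a search from a house exposed by a
maximum matching can only end at an `R`-exposed house. It also agrees with the walk-based notion.

If an agent `x` unmatched in `R` strictly prefers an even house `h` to `M(x)` (which happens when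
`R` is not maximum, or when `M(x) ∉ f(x) ∪ s(x)`), then `M` is not popular: `x` moves to `h` and
the path agents shift to other first choices; if the holder `d` of the bottom house is displaced,
it moves to a first choice, evicting at most one agent to its last resort. So the gainers always
outnumber the losers. Conversely, under (1) and (2), an agent `a` preferring a matching `M'` gets
there a house better than `M(a) ∈ s(a)`, hence not even; its `R`-holder either prefers `M` or
takes in `M'` another first choice, again not even. These chases are injective and cannot cycle,
so they map the agents preferring `M'` injectively into those preferring `M`.
-/

theorem isAlternatingWalk_nil {V : Type*} {G : SimpleGraph V} {M : Set (Sym2 V)} {u : V} :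
    IsAlternatingWalk M (SimpleGraph.Walk.nil : G.Walk u u) := by
  simp [IsAlternatingWalk]

theorem isAlternatingWalk_concat_iff {V : Type*} {G : SimpleGraph V} {M : Set (Sym2 V)}
    {u v w : V} (p : G.Walk u v) (hadj : G.Adj v w) :
    IsAlternatingWalk M (p.concat hadj) ↔
      IsAlternatingWalk M p ∧ (s(v, w) ∈ M ↔ p.length % 2 = 1) := by
  simp only [IsAlternatingWalk, SimpleGraph.Walk.edges_concat, List.concat_eq_append,
    List.length_append, List.length_singleton, List.get_eq_getElem]
  constructor
  · intro halt
    refine ⟨fun i hi => ?_, ?_⟩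
    · simpa [List.getElem_append_left hi] using halt i (by omega)
    · simpa [p.length_edges] using halt p.edges.length (by omega)
  · rintro ⟨halt, hlast⟩ i hi
    rcases Nat.lt_or_ge i p.edges.length with hi' | hi'
    · simpa [List.getElem_append_left hi'] using halt i hi'
    · obtain rfl : i = p.edges.length := by omega
      simpa [p.length_edges] using hlast

theorem Relator.LeftUnique.exists_reflTransGen_forall_not {α : Type*} [Finite α]
    {r : α → α → Prop} (hr : Relator.LeftUnique r) {x : α} (hx : ∀ u, ¬ r u x) :
    ∃ y, Relation.ReflTransGen r x y ∧ ∀ z, ¬ r y z := by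
  by_contra! hstep
  choose g hg using fun y : {y // Relation.ReflTransGen r x y} => hstep y.1 y.2
  have hinj : Function.Injective fun y => (⟨g y, y.2.tail (hg y)⟩ : {y // _}) := by
    intro y₁ y₂ h
    have h₁ := hg y₁
    rw [show g y₁ = g y₂ from congrArg Subtype.val h] at h₁
    exact Subtype.ext (hr h₁ (hg y₂))
  obtain ⟨y, hy⟩ := Finite.injective_iff_surjective.1 hinj ⟨x, .refl⟩
  have h₁ := hg y
  rw [show g y = x from congrArg Subtype.val hy] at h₁
  exact hx y h₁

theorem Relator.LeftUnique.eq_of_reflTransGen {α : Type*} {r : α → α → Prop}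
    (hr : Relator.LeftUnique r) {x y z : α} (hxz : Relation.ReflTransGen r x z)
    (hyz : Relation.ReflTransGen r y z) (hx : ∀ u, ¬ r u x) (hy : ∀ u, ¬ r u y) : x = y := by
  have hr' : Relator.RightUnique (Function.swap r) := fun _ _ _ hab hac => hr hab hac
  rcases Relation.ReflTransGen.total_of_right_unique hr' (Relation.reflTransGen_swap.2 hxz)
    (Relation.reflTransGen_swap.2 hyz) with h | h
  · rcases (Relation.reflTransGen_swap.1 h).cases_tail with rfl | ⟨c, -, hc⟩
    exacts [rfl, absurd hc (hx c)]
  · rcases (Relation.reflTransGen_swap.1 h).cases_tail with rfl | ⟨c, -, hc⟩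
    exacts [rfl, absurd hc (hy c)]

theorem ncard_sdiff_lt_of_mem {α : Type*} {R N N' : Set α} {q : α} (hR : R.Finite)
    (hsub : R ∩ N ⊆ N') (hq : q ∈ R \ N) (hq' : q ∈ N') : (R \ N').ncard < (R \ N).ncard := by
  refine Set.ncard_lt_ncard ((Set.ssubset_iff_of_subset ?_).2 ⟨q, hq, fun h => h.2 hq'⟩)
    (hR.subset Set.sdiff_subset)
  exact fun x hx => ⟨hx.1, fun hxN => hx.2 (hsub ⟨hx.1, hxN⟩)⟩

namespace HATInstance

variable {A H : Type*}

section Matching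

variable {E M : Set (A × H)}

theorem IsMatchingIn.snd_eq (hM : IsMatchingIn E M) {a : A} {h h' : H}
    (h₁ : (a, h) ∈ M) (h₂ : (a, h') ∈ M) : h = h' :=
  congrArg Prod.snd (hM.2.1 _ h₁ _ h₂ rfl)

theorem IsMatchingIn.fst_eq (hM : IsMatchingIn E M) {a a' : A} {h : H}
    (h₁ : (a, h) ∈ M) (h₂ : (a', h) ∈ M) : a = a' :=
  congrArg Prod.fst (hM.2.2 _ h₁ _ h₂ rfl)

theorem IsMatchingIn.inter (hM : IsMatchingIn E M) (E' : Set (A × H)) :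
    IsMatchingIn E' (M ∩ E') :=
  ⟨Set.inter_subset_right, fun p hp q hq => hM.2.1 p hp.1 q hq.1,
    fun p hp q hq => hM.2.2 p hp.1 q hq.1⟩

theorem IsMatchingIn.sdiff (hM : IsMatchingIn E M) (S : Set (A × H)) : IsMatchingIn E (M \ S) :=
  ⟨Set.sdiff_subset.trans hM.1, fun p hp q hq => hM.2.1 p hp.1 q hq.1,
    fun p hp q hq => hM.2.2 p hp.1 q hq.1⟩

theorem IsMatchingIn.insert_exposed (hM : IsMatchingIn E M) {a : A} {h : H} (hE : (a, h) ∈ E)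
    (ha : ∀ g, (a, g) ∉ M) (hh : ∀ c, (c, h) ∉ M) : IsMatchingIn E (insert (a, h) M) := by
  refine ⟨Set.insert_subset hE hM.1, ?_, ?_⟩
  · rintro ⟨p₁, p₂⟩ (hp | hp) ⟨q₁, q₂⟩ (hq | hq) (rfl : p₁ = q₁)
    · rw [hp, hq]
    · simp_all
    · simp_all
    · rw [hM.snd_eq hp hq]
  · rintro ⟨p₁, p₂⟩ (hp | hp) ⟨q₁, q₂⟩ (hq | hq) (rfl : p₂ = q₂)
    · rw [hp, hq]
    · simp_all
    · simp_all
    · rw [hM.fst_eq hp hq]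

theorem IsMatchingIn.finite [Finite A] (hM : IsMatchingIn E M) : M.Finite :=
  Set.Finite.of_finite_image (Set.toFinite _) fun p hp q hq => hM.2.1 p hp q hq

theorem IsMatchingIn.ncard_fst_image (hM : IsMatchingIn E M) :
    (Prod.fst '' M).ncard = M.ncard :=
  Set.InjOn.ncard_image fun p hp q hq => hM.2.1 p hp q hq

variable {a : A} {h h₁ : H}

theorem IsMatchingIn.exchange (hM : IsMatchingIn E M) (hE : (a, h) ∈ E)
    (hh : ∀ c, (c, h) ∉ M) (hh₁ : (a, h₁) ∈ M) :
    IsMatchingIn E (insert (a, h) (M \ {(a, h₁)})) := by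
  refine (hM.sdiff _).insert_exposed hE (fun g hg => hg.2 ?_) (fun c hc => hh c hc.1)
  rw [hM.snd_eq hg.1 hh₁, Set.mem_singleton_iff]

theorem IsMatchingIn.not_mem_exchange (hM : IsMatchingIn E M) (hh₁ : (a, h₁) ∈ M)
    (hne : h₁ ≠ h) (c : A) : (c, h₁) ∉ insert (a, h) (M \ {(a, h₁)}) := by
  rintro (hc | ⟨hc, hc'⟩)
  · exact hne (congrArg Prod.snd hc)
  · exact hc' (by rw [hM.fst_eq hc hh₁, Set.mem_singleton_iff])

end Matching

section AltChain

variable {E R : Set (A × H)}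

/-- `AltChain E R h e L` encodes the `R`-alternating path `h, b₁, g₁, …, bₙ, gₙ = e` (for
`L = [(b₁, g₁), …, (bₙ, gₙ)]`), read from `h` down to the `R`-exposed house `e`: each `bᵢ` is
`R`-matched to the house above it and joined to `gᵢ` by an edge of `E \ R`. -/
inductive AltChain (E R : Set (A × H)) : H → H → List (A × H) → Prop
  | nil {h : H} (hexp : ∀ a, (a, h) ∉ R) : AltChain E R h h []
  | cons {h g e : H} {b : A} {L : List (A × H)} (hR : (b, h) ∈ R) (hE : (b, g) ∈ E)
      (hnR : (b, g) ∉ R) (hc : AltChain E R g e L) : AltChain E R h e ((b, g) :: L)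

def IsAltEven (E R : Set (A × H)) (h : H) : Prop := ∃ e L, AltChain E R h e L

namespace AltChain

variable {h e : H} {L : List (A × H)}

theorem not_mem_bottom (hc : AltChain E R h e L) (a : A) : (a, e) ∉ R := by
  induction hc with
  | nil hexp => exact hexp a
  | cons _ _ _ _ ih => exact ih

theorem bottom_mem (hc : AltChain E R h e L) : e ∈ h :: L.map Prod.snd := by
  induction hc with
  | nil => exact List.mem_singleton_self _
  | cons _ _ _ _ ih => exact List.mem_cons_of_mem _ ih

theorem subset (hc : AltChain E R h e L) : ∀ p ∈ L, p ∈ E := by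
  induction hc with
  | nil => simp
  | cons _ hE _ _ ih =>
    intro p hp
    rcases List.mem_cons.1 hp with rfl | hp
    exacts [hE, ih p hp]

theorem exists_mem_of_mem_fst (hc : AltChain E R h e L) {b : A} (hb : b ∈ L.map Prod.fst) :
    ∃ u ∈ h :: L.map Prod.snd, (b, u) ∈ R := by
  induction hc with
  | nil => simp at hb
  | cons hR _ _ _ ih =>
    rcases List.mem_cons.1 hb with rfl | hb
    · exact ⟨_, List.mem_cons_self, hR⟩
    · obtain ⟨u, hu, hbu⟩ := ih hb
      exact ⟨u, List.mem_cons_of_mem _ hu, hbu⟩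

theorem not_mem_fst (hc : AltChain E R h e L) {x : A} (hx : ∀ u, (x, u) ∉ R) :
    x ∉ L.map Prod.fst := fun hmem =>
  let ⟨u, _, hu⟩ := hc.exists_mem_of_mem_fst hmem
  hx u hu

theorem nodup_fst {E' : Set (A × H)} (hR : IsMatchingIn E' R) (hc : AltChain E R h e L)
    (hnd : (h :: L.map Prod.snd).Nodup) : (L.map Prod.fst).Nodup := by
  induction hc with
  | nil => simp
  | cons hbh _ _ hc ih =>
    rw [List.map_cons, List.nodup_cons] at hnd ⊢
    refine ⟨fun hb => hnd.1 ?_, ih hnd.2⟩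
    obtain ⟨u, hu, hbu⟩ := hc.exists_mem_of_mem_fst hb
    rwa [← hR.snd_eq hbu hbh]

theorem eq_bottom_or_mem_fst {E' M : Set (A × H)} (hM : IsMatchingIn E' M) (hRM : R ⊆ M)
    (hc : AltChain E R h e L) :
    ∀ u ∈ h :: L.map Prod.snd, ∀ c, (c, u) ∈ M → u = e ∨ c ∈ L.map Prod.fst := by
  induction hc with
  | nil => simp
  | cons hbh _ _ _ ih =>
    intro u hu c hc
    rcases List.mem_cons.1 hu with rfl | hu
    · exact .inr (by rw [hM.fst_eq hc (hRM hbh)]; exact List.mem_cons_self)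
    · exact (ih u hu c hc).imp_right (List.mem_cons_of_mem _)

theorem exists_suffix (hc : AltChain E R h e L) {g : H} (hg : g ∈ h :: L.map Prod.snd) :
    ∃ L', AltChain E R g e L' ∧ g :: L'.map Prod.snd <:+ h :: L.map Prod.snd := by
  induction hc with
  | nil hexp =>
    rw [List.mem_singleton.1 hg]
    exact ⟨[], .nil hexp, List.suffix_refl _⟩
  | @cons h g₁ e b L hR hE hnR hc ih =>
    rcases List.mem_cons.1 hg with rfl | hg
    · exact ⟨_, .cons hR hE hnR hc, List.suffix_refl _⟩
    · obtain ⟨L', hc', hs'⟩ := ih hg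
      exact ⟨L', hc', hs'.trans (List.suffix_cons _ _)⟩

theorem exists_nodup (hc : AltChain E R h e L) :
    ∃ L', AltChain E R h e L' ∧ (h :: L'.map Prod.snd).Nodup := by
  induction hc with
  | nil hexp => exact ⟨[], .nil hexp, by simp⟩
  | @cons h g e b L hR hE hnR _ ih =>
    obtain ⟨L', hc', hnd'⟩ := ih
    by_cases hh : h ∈ g :: L'.map Prod.snd
    · obtain ⟨L'', hc'', hs⟩ := hc'.exists_suffix hh
      exact ⟨L'', hc'', hs.sublist.nodup hnd'⟩
    · exact ⟨_, .cons hR hE hnR hc', by rw [List.map_cons]; exact List.nodup_cons.2 ⟨hh, hnd'⟩⟩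

theorem exists_flip (hR : IsMatchingIn E R) (hc : AltChain E R h e L)
    (hnd : (h :: L.map Prod.snd).Nodup) :
    ∃ N, IsMatchingIn E N ∧ N.ncard = R.ncard ∧ (∀ a, (a, h) ∉ N) ∧
      ∀ p ∈ R, p.2 ∉ h :: L.map Prod.snd → p ∈ N := by
  induction hc with
  | nil hexp => exact ⟨R, hR, rfl, hexp, fun p hp _ => hp⟩
  | @cons h g e b L hbh hE _ _ ih =>
    rw [List.map_cons] at hnd
    have hh : h ∉ g :: L.map Prod.snd := (List.nodup_cons.1 hnd).1
    obtain ⟨N, hN, hcard, hg, hkeep⟩ := ih hnd.of_cons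
    have hbhN : (b, h) ∈ N := hkeep _ hbh hh
    have hgh : h ≠ g := fun e => hh (e ▸ List.mem_cons_self)
    refine ⟨_, hN.exchange hE hg hbhN, (Set.ncard_exchange (hg b) hbhN).trans hcard,
      hN.not_mem_exchange hbhN hgh, fun p hp hp2 => .inr ⟨hkeep p hp fun hm => hp2 ?_, ?_⟩⟩
    · exact List.mem_cons_of_mem _ hm
    · rintro rfl
      exact hp2 List.mem_cons_self

end AltChain

theorem IsAltEven.exists_isMaxMatchingIn {h : H} (hR : IsMaxMatchingIn E R)
    (he : IsAltEven E R h) : ∃ N, IsMaxMatchingIn E N ∧ ∀ a, (a, h) ∉ N := by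
  obtain ⟨e, L, hc⟩ := he
  obtain ⟨L', hc', hnd⟩ := hc.exists_nodup
  obtain ⟨N, hN, hcard, hh, -⟩ := hc'.exists_flip hR.1 hnd
  exact ⟨N, ⟨hN, fun N' hN' => hcard ▸ hR.2 N' hN'⟩, hh⟩

variable [Finite A]

/-- The `R`-partner `a` of `h` is either exposed in `N`, and `(a, h)` augments `N`, or matched in
`N` to some `g`, and exchanging `(a, g)` for `(a, h)` moves the search down to `g`. -/
theorem isAltEven_or_exists_ncard_eq_add_one (hR : IsMatchingIn E R) {N : Set (A × H)}
    (hN : IsMatchingIn E N) {h : H} (hh : ∀ a, (a, h) ∉ N) :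
    IsAltEven E R h ∨ ∃ N', IsMatchingIn E N' ∧ N'.ncard = N.ncard + 1 ∧
      (R \ N').ncard < (R \ N).ncard := by
  induction hm : (R \ N).ncard using Nat.strong_induction_on generalizing N h with
  | _ m ih =>
  by_cases hRh : ∀ a, (a, h) ∉ R
  · exact .inl ⟨h, [], .nil hRh⟩
  push Not at hRh
  obtain ⟨a, ha⟩ := hRh
  have haN : (a, h) ∈ R \ N := ⟨ha, hh a⟩
  by_cases hNa : ∃ g, (a, g) ∈ N
  · obtain ⟨g, hg⟩ := hNa
    have hgh : g ≠ h := fun e => hh a (e ▸ hg)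
    have hgR : (a, g) ∉ R := fun hg' => hgh (hR.snd_eq hg' ha)
    have hlt : (R \ insert (a, h) (N \ {(a, g)})).ncard < m := hm ▸
      ncard_sdiff_lt_of_mem hR.finite (fun q hq => .inr ⟨hq.2, fun e => hgR (e ▸ hq.1)⟩) haN
        (Set.mem_insert _ _)
    rcases ih _ hlt (hN.exchange (hR.1 ha) hh hg) (hN.not_mem_exchange hg hgh) rfl with
      ⟨e, L, hc⟩ | ⟨N', hN', hcard, hlt'⟩
    · exact .inl ⟨e, _, .cons ha (hN.1 hg) hgR hc⟩
    · exact .inr ⟨N', hN', by rw [hcard, Set.ncard_exchange (hh a) hg], hlt'.trans hlt⟩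
  · push Not at hNa
    exact .inr ⟨_, hN.insert_exposed (hR.1 ha) hNa hh, Set.ncard_insert_of_notMem (hh a) hN.finite,
      hm ▸ ncard_sdiff_lt_of_mem hR.finite (fun q hq => .inr hq.2) haN (Set.mem_insert _ _)⟩

theorem isAltEven_of_isMaxMatchingIn (hR : IsMatchingIn E R) {N : Set (A × H)}
    (hN : IsMaxMatchingIn E N) {h : H} (hh : ∀ a, (a, h) ∉ N) : IsAltEven E R h :=
  (isAltEven_or_exists_ncard_eq_add_one hR hN.1 hh).resolve_right
    fun ⟨N', hN', hcard, _⟩ => by have := hN.2 N' hN'; omega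

theorem IsAltEven.of_isMaxMatchingIn {R' : Set (A × H)} {h : H} (hR : IsMaxMatchingIn E R)
    (hR' : IsMatchingIn E R') (he : IsAltEven E R h) : IsAltEven E R' h :=
  let ⟨_, hN, hh⟩ := he.exists_isMaxMatchingIn hR
  isAltEven_of_isMaxMatchingIn hR' hN hh

theorem exists_isAltEven_of_ncard_lt (hR : IsMatchingIn E R) {N : Set (A × H)}
    (hN : IsMatchingIn E N) (hlt : R.ncard < N.ncard) :
    ∃ a h, (∀ g, (a, g) ∉ R) ∧ (a, h) ∈ E ∧ IsAltEven E R h := by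
  induction hm : (R \ N).ncard using Nat.strong_induction_on generalizing N with
  | _ m ih =>
  obtain ⟨a, ⟨⟨a', h₁⟩, hp, rfl⟩, haR⟩ : (Prod.fst '' N \ Prod.fst '' R).Nonempty := by
    refine Set.nonempty_of_ncard_ne_zero fun h0 => ?_
    have := Set.le_ncard_sdiff (Prod.fst '' R) (Prod.fst '' N)
    rw [hR.ncard_fst_image, hN.ncard_fst_image] at this
    omega
  have haR' : ∀ g, (a', g) ∉ R := fun g hg => haR ⟨_, hg, rfl⟩
  have hdiff : R \ (N \ {(a', h₁)}) = R \ N := by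
    ext q
    simp only [Set.mem_sdiff, Set.mem_singleton_iff, not_and, not_not]
    exact ⟨fun ⟨hq, hq'⟩ => ⟨hq, fun hqN => haR' h₁ (hq' hqN ▸ hq)⟩,
      fun ⟨hq, hq'⟩ => ⟨hq, fun hqN => absurd hqN hq'⟩⟩
  rcases isAltEven_or_exists_ncard_eq_add_one hR (hN.sdiff {(a', h₁)})
      (fun c hc => hc.2 (by rw [hN.fst_eq hc.1 hp, Set.mem_singleton_iff])) with
    he | ⟨N', hN', hcard, hlt'⟩
  · exact ⟨a', h₁, haR', hN.1 hp, he⟩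
  · have := Set.ncard_sdiff_singleton_add_one hp hN.finite
    exact ih _ (hm ▸ hdiff ▸ hlt') hN' (by omega) rfl

end AltChain

section Preferences

variable {I : HATInstance A H} {a : A} {h h' : H}

theorem exists_mem_firstChoices (I : HATInstance A H) (a : A) : ∃ h, h ∈ I.firstChoices a := by
  obtain ⟨h, hadj, hmin⟩ := (InvImage.wf (I.rank a) wellFounded_lt).has_min {h | I.adj a h}
    ⟨_, I.lastResort_adj a⟩
  exact ⟨h, hadj, fun h' hadj' => not_lt.1 (hmin h' hadj')⟩

theorem mem_firstChoices_of_rank_le (hf : h ∈ I.firstChoices a) (hadj : I.adj a h')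
    (hle : I.rank a h' ≤ I.rank a h) : h' ∈ I.firstChoices a :=
  ⟨hadj, fun h'' hadj'' => hle.trans (hf.2 h'' hadj'')⟩

theorem rank_lt_of_not_mem_firstChoices (hf : h ∈ I.firstChoices a) (hadj : I.adj a h')
    (hnf : h' ∉ I.firstChoices a) : I.rank a h < I.rank a h' :=
  not_le.1 fun hle => hnf (mem_firstChoices_of_rank_le hf hadj hle)

end Preferences

def reassign (M : Set (A × H)) (news : List (A × H)) : Set (A × H) :=
  {q | q ∈ M ∧ q.1 ∉ news.map Prod.fst} ∪ {q | q ∈ news}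

section Reassign

variable {E M : Set (A × H)} {news : List (A × H)}

theorem IsMatchingIn.reassign (hM : IsMatchingIn E M) (hE : ∀ p ∈ news, p ∈ E)
    (hA : (news.map Prod.fst).Nodup) (hH : (news.map Prod.snd).Nodup)
    (hOwn : ∀ p ∈ news, ∀ c, (c, p.2) ∈ M → c ∈ news.map Prod.fst) :
    IsMatchingIn E (reassign M news) := by
  refine ⟨?_, ?_, ?_⟩
  · rintro p (⟨hp, -⟩ | hp)
    exacts [hM.1 hp, hE p hp]
  · rintro p (⟨hp, hp'⟩ | hp) q (⟨hq, hq'⟩ | hq) hpq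
    · exact hM.2.1 p hp q hq hpq
    · exact absurd (hpq ▸ List.mem_map_of_mem hq) hp'
    · exact absurd (hpq ▸ List.mem_map_of_mem hp) hq'
    · exact List.inj_on_of_nodup_map hA hp hq hpq
  · rintro p (⟨hp, hp'⟩ | hp) q (⟨hq, hq'⟩ | hq) hpq
    · exact hM.2.2 p hp q hq hpq
    · exact absurd (hOwn q hq p.1 (hpq ▸ hp)) hp'
    · exact absurd (hOwn p hp q.1 (hpq ▸ hq)) hq'
    · exact List.inj_on_of_nodup_map hH hp hq hpq

variable {I : HATInstance A H} {x : A}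

theorem prefers_reassign {h : H} (hx : (x, h) ∈ news)
    (hgain : ∀ h₀, (x, h₀) ∈ M → I.rank x h < I.rank x h₀) :
    Prefers I (reassign M news) M x :=
  ⟨h, .inr hx, hgain⟩

theorem Prefers.exists_of_reassign (hx : Prefers I M (reassign M news) x) :
    ∃ h₀ h, (x, h₀) ∈ M ∧ (x, h) ∈ news ∧ I.rank x h₀ < I.rank x h := by
  obtain ⟨h₀, hh₀, hlt⟩ := hx
  by_cases hxn : x ∈ news.map Prod.fst
  · obtain ⟨⟨x', h⟩, hp, rfl⟩ := List.exists_of_mem_map hxn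
    exact ⟨h₀, h, hh₀, hp, hlt h (.inr hp)⟩
  · exact absurd (hlt h₀ (.inl ⟨hh₀, hxn⟩)) (lt_irrefl _)

theorem not_isPopular_of_reassign [Fintype A] (hM : I.IsMatching M)
    (hE : ∀ p ∈ news, I.adj p.1 p.2) (hA : (news.map Prod.fst).Nodup)
    (hH : (news.map Prod.snd).Nodup)
    (hOwn : ∀ p ∈ news, ∀ c, (c, p.2) ∈ M → c ∈ news.map Prod.fst) {W Lo : Set A}
    (hW : ∀ x ∈ W, ∃ h, (x, h) ∈ news ∧ ∀ h₀, (x, h₀) ∈ M → I.rank x h < I.rank x h₀)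
    (hLo : ∀ p ∈ news, p.1 ∉ Lo → ∀ h₀, (p.1, h₀) ∈ M → I.rank p.1 p.2 ≤ I.rank p.1 h₀)
    (hcard : Lo.ncard < W.ncard) : ¬ IsPopular I M := by
  refine fun hpop => hpop.2 _ (IsMatchingIn.reassign hM hE hA hH hOwn) ?_
  have hwin : W.ncard ≤ {x | Prefers I (reassign M news) M x}.ncard :=
    Set.ncard_le_ncard fun x hx =>
      let ⟨_, hxh, hgain⟩ := hW x hx
      prefers_reassign hxh hgain
  have hlose : {x | Prefers I M (reassign M news) x}.ncard ≤ Lo.ncard := by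
    refine Set.ncard_le_ncard fun x hx => by_contra fun hxLo => ?_
    obtain ⟨h₀, h, hh₀, hxh, hlt⟩ := Prefers.exists_of_reassign hx
    exact absurd (hLo _ hxh hxLo h₀ hh₀) (not_le.2 hlt)
  unfold MorePopular
  rw [Nat.card_coe_set_eq, Nat.card_coe_set_eq]
  omega

end Reassign

section Improvement

variable {I : HATInstance A H} {M : Set (A × H)} {h e : H} {L : List (A × H)}

namespace AltChain

theorem not_mem_of_mem_bottom (hM : I.IsMatching M)
    (hc : AltChain I.firstChoiceEdges (M ∩ I.firstChoiceEdges) h e L) {d : A}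
    (hd : (d, e) ∈ M) (u : H) : (d, u) ∉ M ∩ I.firstChoiceEdges := fun hu =>
  hc.not_mem_bottom d (hM.snd_eq hu.1 hd ▸ hu)

theorem rank_lt_of_mem_bottom (hM : I.IsMatching M)
    (hc : AltChain I.firstChoiceEdges (M ∩ I.firstChoiceEdges) h e L) {d : A}
    (hd : (d, e) ∈ M) {g : H} (hg : g ∈ I.firstChoices d) (h₀ : H) (hh₀ : (d, h₀) ∈ M) :
    I.rank d g < I.rank d h₀ := by
  rw [hM.snd_eq hh₀ hd]
  exact rank_lt_of_not_mem_firstChoices hg (hM.1 hd) fun hf => hc.not_mem_bottom d ⟨hd, hf⟩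

variable [Fintype A]

/-- If nobody but `x` holds the bottom house, `x` moves up to `h` and the chain agents shift
down to equally good first choices: `x` gains and nobody loses. -/
theorem not_isPopular_of_shift (hM : I.IsMatching M)
    (hc : AltChain I.firstChoiceEdges (M ∩ I.firstChoiceEdges) h e L)
    (hnd : (h :: L.map Prod.snd).Nodup) {x : A} (hxR : ∀ u, (x, u) ∉ M ∩ I.firstChoiceEdges)
    (hxh : I.adj x h) (hgain : ∀ h₀, (x, h₀) ∈ M → I.rank x h < I.rank x h₀)
    (he : ∀ c, (c, e) ∈ M → c = x) : ¬ IsPopular I M := by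
  have hown := hc.eq_bottom_or_mem_fst hM Set.inter_subset_left
  refine not_isPopular_of_reassign (news := (x, h) :: L) (W := {x}) (Lo := ∅) hM
    (List.forall_mem_cons.2 ⟨hxh, fun p hp => (hc.subset p hp).1⟩)
    (List.nodup_cons.2 ⟨hc.not_mem_fst hxR, hc.nodup_fst (hM.inter _) hnd⟩) hnd ?_
    (by rintro y rfl; exact ⟨h, List.mem_cons_self, hgain⟩) ?_ (by simp)
  · intro p hp c hcp
    rcases hown p.2 (List.mem_map_of_mem hp) c hcp with hpe | hcL
    · exact List.mem_cons.2 (.inl (he c (hpe ▸ hcp)))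
    · exact List.mem_cons_of_mem _ hcL
  · intro p hp _ h₀ hh₀
    rcases List.mem_cons.1 hp with rfl | hp
    · exact (hgain h₀ hh₀).le
    · exact (hc.subset p hp).2 h₀ (hM.1 hh₀)

/-- If `d ≠ x` holds the bottom house and its first choice `g` lies off the chain, then after the
shift `d` moves to `g`, evicting its holder `c` (if `c ≠ x`) to `c`'s last resort: `x` and `d`
gain, at most `c` loses. -/
theorem not_isPopular_of_fresh (hM : I.IsMatching M)
    (hc : AltChain I.firstChoiceEdges (M ∩ I.firstChoiceEdges) h e L)
    (hnd : (h :: L.map Prod.snd).Nodup) {x : A} (hxR : ∀ u, (x, u) ∉ M ∩ I.firstChoiceEdges)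
    (hxh : I.adj x h) (hgain : ∀ h₀, (x, h₀) ∈ M → I.rank x h < I.rank x h₀) {d : A}
    (hd : (d, e) ∈ M) (hdx : d ≠ x) {g : H} (hg : g ∈ I.firstChoices d)
    (hgL : g ∉ h :: L.map Prod.snd) : ¬ IsPopular I M := by
  have hown := hc.eq_bottom_or_mem_fst hM Set.inter_subset_left
  set T := (d, g) :: (x, h) :: L
  have hTE : ∀ p ∈ T, I.adj p.1 p.2 :=
    List.forall_mem_cons.2 ⟨hg.1, List.forall_mem_cons.2 ⟨hxh, fun p hp => (hc.subset p hp).1⟩⟩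
  have hTA : (T.map Prod.fst).Nodup := by
    have hdL := hc.not_mem_fst (hc.not_mem_of_mem_bottom hM hd)
    simp only [T, List.map_cons, List.nodup_cons, List.mem_cons, not_or]
    exact ⟨⟨hdx, hdL⟩, hc.not_mem_fst hxR, hc.nodup_fst (hM.inter _) hnd⟩
  have hTH : (T.map Prod.snd).Nodup := List.nodup_cons.2 ⟨hgL, hnd⟩
  have hTOwn : ∀ p ∈ (x, h) :: L, ∀ c, (c, p.2) ∈ M → c ∈ T.map Prod.fst := by
    intro p hp c hcp
    rcases hown p.2 (List.mem_map_of_mem hp) c hcp with hpe | hcL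
    · exact List.mem_cons.2 (.inl (hM.fst_eq (hpe ▸ hcp) hd))
    · exact List.mem_cons_of_mem _ (List.mem_cons_of_mem _ hcL)
  have hTLo : ∀ p ∈ T, ∀ h₀, (p.1, h₀) ∈ M → I.rank p.1 p.2 ≤ I.rank p.1 h₀ := by
    intro p hp h₀ hh₀
    rcases List.mem_cons.1 hp with rfl | hp
    · exact hg.2 h₀ (hM.1 hh₀)
    rcases List.mem_cons.1 hp with rfl | hp
    · exact (hgain h₀ hh₀).le
    · exact (hc.subset p hp).2 h₀ (hM.1 hh₀)
  have hTW : ∀ y ∈ ({x, d} : Set A), ∃ h, (y, h) ∈ T ∧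
      ∀ h₀, (y, h₀) ∈ M → I.rank y h < I.rank y h₀ := by
    rintro y (rfl | rfl)
    exacts [⟨h, by simp [T], hgain⟩, ⟨g, List.mem_cons_self, hc.rank_lt_of_mem_bottom hM hd hg⟩]
  have hW : ({x, d} : Set A).ncard = 2 := Set.ncard_pair hdx.symm
  by_cases hcg : ∃ c, (c, g) ∈ M ∧ c ≠ x
  · obtain ⟨c, hcg, hcx⟩ := hcg
    have hcT : c ∉ T.map Prod.fst := by
      have hcd : c ≠ d := fun hcd => hgL (hM.snd_eq (hcd ▸ hcg) hd ▸ hc.bottom_mem)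
      have hcL : c ∉ L.map Prod.fst := fun hcL =>
        let ⟨u, hu, hcu⟩ := hc.exists_mem_of_mem_fst hcL
        hgL (hM.snd_eq hcu.1 hcg ▸ hu)
      simp only [T, List.map_cons, List.mem_cons, not_or]
      exact ⟨hcd, hcx, hcL⟩
    have hlc : I.lastResort c ∉ T.map Prod.snd := fun hmem =>
      let ⟨p, hp, hpc⟩ := List.exists_of_mem_map hmem
      hcT (I.lastResort_only c p.1 (hpc ▸ hTE p hp) ▸ List.mem_map_of_mem hp)
    refine not_isPopular_of_reassign (news := (c, I.lastResort c) :: T) (Lo := {c}) hM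
      (List.forall_mem_cons.2 ⟨I.lastResort_adj c, hTE⟩) (List.nodup_cons.2 ⟨hcT, hTA⟩)
      (List.nodup_cons.2 ⟨hlc, hTH⟩) ?_
      (fun y hy => let ⟨h, hh, hyh⟩ := hTW y hy; ⟨h, List.mem_cons_of_mem _ hh, hyh⟩) ?_
      (by rw [hW, Set.ncard_singleton]; omega)
    · intro p hp c' hc'
      rcases List.mem_cons.1 hp with rfl | hp
      · exact List.mem_cons.2 (.inl (I.lastResort_only c c' (hM.1 hc')))
      rcases List.mem_cons.1 hp with rfl | hp
      · exact List.mem_cons.2 (.inl (hM.fst_eq hc' hcg))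
      · exact List.mem_cons_of_mem _ (hTOwn p hp c' hc')
    · intro p hp hpc
      rcases List.mem_cons.1 hp with rfl | hp
      exacts [absurd rfl hpc, hTLo p hp]
  · push Not at hcg
    refine not_isPopular_of_reassign (news := T) (Lo := ∅) hM hTE hTA hTH ?_ hTW
      (fun p hp _ => hTLo p hp) (by rw [hW, Set.ncard_empty]; omega)
    intro p hp c' hc'
    rcases List.mem_cons.1 hp with rfl | hp
    · exact List.mem_cons_of_mem _ (List.mem_cons.2 (.inl (hcg c' hc')))
    · exact hTOwn p hp c' hc'

end AltChain

theorem not_isPopular_of_isAltEven [Fintype A] (hM : I.IsMatching M)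
    (heven : IsAltEven I.firstChoiceEdges (M ∩ I.firstChoiceEdges) h) {x : A}
    (hxR : ∀ u, (x, u) ∉ M ∩ I.firstChoiceEdges) (hxh : I.adj x h)
    (hgain : ∀ h₀, (x, h₀) ∈ M → I.rank x h < I.rank x h₀) : ¬ IsPopular I M := by
  obtain ⟨e, L₀, hc₀⟩ := heven
  obtain ⟨L, hc, hnd⟩ := hc₀.exists_nodup
  by_cases hd : ∃ d, (d, e) ∈ M ∧ d ≠ x
  · obtain ⟨d, hd, hdx⟩ := hd
    obtain ⟨g, hg⟩ := I.exists_mem_firstChoices d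
    by_cases hgL : g ∈ h :: L.map Prod.snd
    · obtain ⟨L', hc', hs⟩ := hc.exists_suffix hgL
      exact hc'.not_isPopular_of_shift hM (hs.sublist.nodup hnd) (hc.not_mem_of_mem_bottom hM hd)
        hg.1 (hc.rank_lt_of_mem_bottom hM hd hg) fun c hc => hM.fst_eq hc hd
    · exact hc.not_isPopular_of_fresh hM hnd hxR hxh hgain hd hdx hg hgL
  · push Not at hd
    exact hc.not_isPopular_of_shift hM hnd hxR hxh hgain hd

end Improvement

section FirstChoiceGraph

open Sum

variable {I : HATInstance A H} {M₁ : Set (A × H)} {a a' : A} {h h' : H}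

theorem mem_sym2Edges_iff : s(inl a, inr h) ∈ sym2Edges M₁ ↔ (a, h) ∈ M₁ := by
  simp [sym2Edges]

theorem unmatchedVtx_inr_iff : UnmatchedVtx (sym2Edges M₁) (inr h) ↔ ∀ a, (a, h) ∉ M₁ := by
  refine ⟨fun hu a ha => hu _ ⟨(a, h), ha, rfl⟩ (Sym2.mem_mk_right _ _), ?_⟩
  rintro hh _ ⟨⟨a, g⟩, hag, rfl⟩ hmem
  obtain rfl : h = g := by simpa using hmem
  exact hh a hag

theorem g1_adj_inl_inr : I.G1.Adj (inl a) (inr h) ↔ h ∈ I.firstChoices a := by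
  simp [G1]

theorem not_g1_adj_inl_inl : ¬ I.G1.Adj (inl a) (inl a') := by
  simp [G1]

theorem not_g1_adj_inr_inr : ¬ I.G1.Adj (inr h) (inr h') := by
  simp [G1]

theorem g1_adj_isLeft {x y : A ⊕ H} (hadj : I.G1.Adj x y) : x.isLeft = !y.isLeft := by
  rcases x with a | h <;> rcases y with a' | h'
  · exact absurd hadj not_g1_adj_inl_inl
  · rfl
  · rfl
  · exact absurd hadj not_g1_adj_inr_inr

theorem g1_even_length_iff {x y : A ⊕ H} (p : I.G1.Walk x y) :
    Even p.length ↔ x.isLeft = y.isLeft := by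
  induction p with
  | nil => simp
  | cons hadj p ih =>
    rw [SimpleGraph.Walk.length_cons, Nat.even_add_one, ih, g1_adj_isLeft hadj]
    generalize Sum.isLeft _ = b
    generalize Sum.isLeft _ = c
    decide +revert

theorem isAltEven_of_isAlternatingWalk {g₀ : H} (hg₀ : ∀ a, (a, g₀) ∉ M₁) {y : A ⊕ H}
    (p : I.G1.Walk (inr g₀) y) (halt : IsAlternatingWalk (sym2Edges M₁) p) :
    (∀ h, y = inr h → IsAltEven I.firstChoiceEdges M₁ h) ∧
      ∀ a h, y = inl a → (a, h) ∈ M₁ → IsAltEven I.firstChoiceEdges M₁ h := by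
  generalize hu : (inr g₀ : A ⊕ H) = u at p
  induction p using SimpleGraph.Walk.concatRec with
  | Hnil =>
    subst hu
    exact ⟨fun h hh => ⟨h, [], inr_injective hh ▸ .nil hg₀⟩, fun _ _ hy => by cases hy⟩
  | @Hconcat u v w p hadj ih =>
    subst hu
    rw [isAlternatingWalk_concat_iff] at halt
    obtain ⟨ihr, ihl⟩ := ih rfl halt.1
    have hpar := g1_even_length_iff p
    rw [Nat.even_iff] at hpar
    rcases v with a | g <;> rcases w with a' | h
    · exact absurd hadj not_g1_adj_inl_inl
    · have hah : (a, h) ∈ M₁ := mem_sym2Edges_iff.1 (halt.2.2 (by simp at hpar; omega))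
      exact ⟨fun h' hh => inr_injective hh ▸ ihl a h rfl hah, fun _ _ hy => by cases hy⟩
    · have hag : (a', g) ∉ M₁ := fun hm => by
        have := halt.2.1 (by rw [Sym2.eq_swap]; exact mem_sym2Edges_iff.2 hm)
        simp at hpar
        omega
      obtain ⟨e, L, hc⟩ := ihr g rfl
      refine ⟨fun _ hy => (by cases hy), fun b h hb hbh => ?_⟩
      cases hb
      exact ⟨e, _, .cons hbh (g1_adj_inl_inr.1 hadj.symm) hag hc⟩
    · exact absurd hadj not_g1_adj_inr_inr

theorem AltChain.exists_g1_path (hM₁ : IsMatchingIn I.firstChoiceEdges M₁) {h e : H}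
    {L : List (A × H)} (hc : AltChain I.firstChoiceEdges M₁ h e L)
    (hnd : (h :: L.map Prod.snd).Nodup) :
    ∃ p : I.G1.Walk (inr e) (inr h), p.IsPath ∧ IsAlternatingWalk (sym2Edges M₁) p ∧
      ∀ v ∈ p.support, (∃ u ∈ h :: L.map Prod.snd, v = inr u) ∨
        ∃ b ∈ L.map Prod.fst, v = inl b := by
  induction hc with
  | nil => exact ⟨.nil, by simp, isAlternatingWalk_nil, by simp⟩
  | @cons h g e b L hbh hbg hnR hc ih =>
    have hb : b ∉ L.map Prod.fst :=
      (List.nodup_cons.1 ((AltChain.cons hbh hbg hnR hc).nodup_fst hM₁ hnd)).1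
    rw [List.map_cons] at hnd
    have hh : h ∉ g :: L.map Prod.snd := (List.nodup_cons.1 hnd).1
    obtain ⟨p, hpath, halt, hsupp⟩ := ih hnd.of_cons
    have hadj₁ : I.G1.Adj (inr g) (inl b) := (g1_adj_inl_inr.2 hbg).symm
    have hadj₂ : I.G1.Adj (inl b) (inr h) := g1_adj_inl_inr.2 (hM₁.1 hbh)
    have hpar : p.length % 2 = 0 := Nat.even_iff.1 ((g1_even_length_iff p).2 rfl)
    refine ⟨(p.concat hadj₁).concat hadj₂, ?_, ?_, ?_⟩
    · rw [SimpleGraph.Walk.concat_isPath_iff, SimpleGraph.Walk.concat_isPath_iff,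
        SimpleGraph.Walk.support_concat]
      refine ⟨⟨hpath, fun hmem => ?_⟩, fun hmem => ?_⟩
      · rcases hsupp _ hmem with ⟨u, -, hu⟩ | ⟨b', hb', hbb'⟩
        · cases hu
        · exact hb (inl_injective hbb' ▸ hb')
      · rcases List.mem_append.1 hmem with hmem | hmem
        · rcases hsupp _ hmem with ⟨u, hu, hhu⟩ | ⟨b', -, hbb'⟩
          · exact hh (inr_injective hhu ▸ hu)
          · cases hbb'
        · simp at hmem
    · rw [isAlternatingWalk_concat_iff, isAlternatingWalk_concat_iff,
        SimpleGraph.Walk.length_concat, Sym2.eq_swap]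
      exact ⟨⟨halt, iff_of_false (mt mem_sym2Edges_iff.1 hnR) (by omega)⟩,
        iff_of_true (mem_sym2Edges_iff.2 hbh) (by omega)⟩
    · intro v hv
      simp only [SimpleGraph.Walk.support_concat, List.mem_append, List.mem_singleton] at hv
      rcases hv with (hv | rfl) | rfl
      · rcases hsupp v hv with ⟨u, hu, rfl⟩ | ⟨b', hb', rfl⟩
        · exact .inl ⟨u, List.mem_cons_of_mem _ hu, rfl⟩
        · exact .inr ⟨b', List.mem_cons_of_mem _ hb', rfl⟩
      · exact .inr ⟨b, List.mem_cons_self, rfl⟩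
      · exact .inl ⟨h, List.mem_cons_self, rfl⟩

theorem evenHouse_iff_isAltEven (hM₁ : IsMatchingIn I.firstChoiceEdges M₁) {h : H} :
    EvenHouse I M₁ h ↔ IsAltEven I.firstChoiceEdges M₁ h := by
  constructor
  · rintro ⟨a | g₀, hu, p, -, halt, heven⟩
    · exact absurd ((g1_even_length_iff p).1 heven) (by simp)
    · exact (isAltEven_of_isAlternatingWalk (unmatchedVtx_inr_iff.1 hu) p halt).1 h rfl
  · rintro ⟨e, L₀, hc₀⟩
    obtain ⟨L, hc, hnd⟩ := hc₀.exists_nodup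
    obtain ⟨p, hpath, halt, -⟩ := hc.exists_g1_path hM₁ hnd
    exact ⟨inr e, unmatchedVtx_inr_iff.2 hc.not_mem_bottom, p, hpath, halt,
      (g1_even_length_iff p).2 rfl⟩

theorem isAltEven_iff_evenHouse [Finite A] {R : Set (A × H)}
    (hR : IsMaxMatchingIn I.firstChoiceEdges R) (hM₁ : IsMaxMatchingIn I.firstChoiceEdges M₁)
    {h : H} : IsAltEven I.firstChoiceEdges R h ↔ EvenHouse I M₁ h := by
  rw [evenHouse_iff_isAltEven hM₁.1]
  exact ⟨IsAltEven.of_isMaxMatchingIn hR hM₁.1, IsAltEven.of_isMaxMatchingIn hM₁ hR.1⟩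

end FirstChoiceGraph

section Necessity

variable [Fintype A] {I : HATInstance A H} {M M₁ : Set (A × H)}

theorem IsPopular.exists_mem (hpop : IsPopular I M) (a : A) : ∃ h, (a, h) ∈ M := by
  by_contra! ha
  refine not_isPopular_of_reassign (news := [(a, I.lastResort a)]) (W := {a}) (Lo := ∅) hpop.1
    (by simpa using I.lastResort_adj a) (by simp) (by simp) ?_ ?_ (by simp [ha]) (by simp) hpop
  · simpa using fun c hc => I.lastResort_only a c (hpop.1.1 hc)
  · rintro x rfl
    exact ⟨_, List.mem_singleton_self _, fun h₀ hh₀ => absurd hh₀ (ha h₀)⟩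

theorem IsPopular.isMaxMatchingIn_inter (hpop : IsPopular I M) :
    IsMaxMatchingIn I.firstChoiceEdges (M ∩ I.firstChoiceEdges) := by
  refine ⟨hpop.1.inter _, fun N hN => not_lt.1 fun hlt => ?_⟩
  obtain ⟨a, h, haR, hah, heven⟩ := exists_isAltEven_of_ncard_lt (hpop.1.inter _) hN hlt
  refine not_isPopular_of_isAltEven hpop.1 heven haR hah.1 (fun h₀ hh₀ => ?_) hpop
  exact rank_lt_of_not_mem_firstChoices hah (hpop.1.1 hh₀) fun hf => haR h₀ ⟨hh₀, hf⟩

theorem IsPopular.exists_mem_firstChoices_union_sChoices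
    (hM₁ : IsMaxMatchingIn I.firstChoiceEdges M₁) (hpop : IsPopular I M) (a : A) :
    ∃ h, (a, h) ∈ M ∧ h ∈ I.firstChoices a ∪ sChoices I M₁ a := by
  obtain ⟨h₀, hh₀⟩ := hpop.exists_mem a
  refine ⟨h₀, hh₀, or_iff_not_imp_left.2 fun hf => ?_⟩
  have haR : ∀ u, (a, u) ∉ M ∩ I.firstChoiceEdges := fun u hu =>
    hf (hpop.1.snd_eq hu.1 hh₀ ▸ hu.2)
  have heven (h : H) := isAltEven_iff_evenHouse (h := h) hpop.isMaxMatchingIn_inter hM₁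
  refine ⟨hpop.1.1 hh₀, (heven h₀).1 ⟨h₀, [], .nil fun c hc => ?_⟩,
    fun t ht hte => not_lt.1 fun hlt => ?_⟩
  · exact haR h₀ (hpop.1.fst_eq hc.1 hh₀ ▸ hc)
  · exact not_isPopular_of_isAltEven hpop.1 ((heven t).2 hte) haR ht
      (fun h₁ hh₁ => hpop.1.snd_eq hh₁ hh₀ ▸ hlt) hpop

end Necessity

section Sufficiency

variable {I : HATInstance A H} {M M' M₁ : Set (A × H)}

def ChaseStep (I : HATInstance A H) (M M' : Set (A × H)) (b b' : A) : Prop :=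
  ∃ h, (b, h) ∈ M' ∧ (b, h) ∉ M ∩ I.firstChoiceEdges ∧ (b', h) ∈ M ∩ I.firstChoiceEdges ∧
    ¬ Prefers I M M' b'

def ChaseInv (I : HATInstance A H) (M M' : Set (A × H)) (b : A) : Prop :=
  ∃ h, (b, h) ∈ M' ∧ (b, h) ∉ M ∩ I.firstChoiceEdges ∧
    ¬ IsAltEven I.firstChoiceEdges (M ∩ I.firstChoiceEdges) h

theorem chaseStep_leftUnique (hM : I.IsMatching M) (hM' : I.IsMatching M') :
    Relator.LeftUnique (ChaseStep I M M') := by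
  rintro b₁ b₂ b' ⟨h₁, hb₁, -, hb'₁, -⟩ ⟨h₂, hb₂, -, hb'₂, -⟩
  rw [hM.snd_eq hb'₁.1 hb'₂.1] at hb₁
  exact hM'.fst_eq hb₁ hb₂

theorem ChaseInv.of_chaseStep (hM : I.IsMatching M) (hM' : I.IsMatching M') {b b' : A}
    (hinv : ChaseInv I M M' b) (hstep : ChaseStep I M M' b b') : ChaseInv I M M' b' := by
  obtain ⟨h, hbh, hbhR, hheven⟩ := hinv
  obtain ⟨h', hbh', -, hb'h, hb'⟩ := hstep
  obtain rfl := hM'.snd_eq hbh' hbh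
  obtain ⟨h₂, hb'h₂, hle⟩ : ∃ h₂, (b', h₂) ∈ M' ∧ I.rank b' h₂ ≤ I.rank b' h' := by
    by_contra! hlt
    exact hb' ⟨h', hb'h.1, hlt⟩
  have hne : h₂ ≠ h' := by
    rintro rfl
    exact hbhR (hM'.fst_eq hbh hb'h₂ ▸ hb'h)
  have hb'h₂R : (b', h₂) ∉ M ∩ I.firstChoiceEdges := fun hR => hne (hM.snd_eq hR.1 hb'h.1)
  refine ⟨h₂, hb'h₂, hb'h₂R, fun ⟨e, L, hc⟩ => hheven ⟨e, _, .cons hb'h ?_ hb'h₂R hc⟩⟩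
  exact mem_firstChoices_of_rank_le hb'h.2 (hM'.1 hb'h₂) hle

theorem ChaseInv.exists_prefers {b : A} (hinv : ChaseInv I M M' b)
    (hb : ∀ b', ¬ ChaseStep I M M' b b') :
    ∃ b' h, (b, h) ∈ M' ∧ (b', h) ∈ M ∩ I.firstChoiceEdges ∧ Prefers I M M' b' := by
  obtain ⟨h, hbh, hbhR, hheven⟩ := hinv
  obtain ⟨b', hb'h⟩ : ∃ b', (b', h) ∈ M ∩ I.firstChoiceEdges := by
    by_contra! hexp
    exact hheven ⟨h, [], .nil hexp⟩
  exact ⟨b', h, hbh, hb'h, by_contra fun hb' => hb b' ⟨h, hbh, hbhR, hb'h, hb'⟩⟩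

theorem exists_chase_of_prefers [Finite A] (hM₁ : IsMaxMatchingIn I.firstChoiceEdges M₁)
    (hM : I.IsMatching M) (hmax : IsMaxMatchingIn I.firstChoiceEdges (M ∩ I.firstChoiceEdges))
    (hall : ∀ a, ∃ h, (a, h) ∈ M ∧ h ∈ I.firstChoices a ∪ sChoices I M₁ a)
    (hM' : I.IsMatching M') {a : A} (ha : Prefers I M' M a) :
    (∀ u, ¬ ChaseStep I M M' u a) ∧ ∃ y b h, Relation.ReflTransGen (ChaseStep I M M') a y ∧
      (y, h) ∈ M' ∧ (b, h) ∈ M ∩ I.firstChoiceEdges ∧ Prefers I M M' b := by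
  obtain ⟨h₁, hah₁, hlt⟩ := ha
  obtain ⟨h₀, hah₀, hfs⟩ := hall a
  have hlt₀ := hlt h₀ hah₀
  have hnf : h₀ ∉ I.firstChoices a := fun hf => absurd (hf.2 h₁ (hM'.1 hah₁)) (not_le.2 hlt₀)
  have haR : ∀ u, (a, u) ∉ M ∩ I.firstChoiceEdges := fun u hu =>
    hnf (hM.snd_eq hu.1 hah₀ ▸ hu.2)
  obtain ⟨-, -, hmin⟩ := hfs.resolve_left hnf
  have hinv : ChaseInv I M M' a := ⟨h₁, hah₁, haR h₁, fun heven => absurd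
    (hmin h₁ (hM'.1 hah₁) ((isAltEven_iff_evenHouse hmax hM₁).1 heven)) (not_le.2 hlt₀)⟩
  have hstart : ∀ u, ¬ ChaseStep I M M' u a := fun _ ⟨_, _, _, hR, _⟩ => haR _ hR
  obtain ⟨y, hay, hy⟩ := (chaseStep_leftUnique hM hM').exists_reflTransGen_forall_not hstart
  have hinvy : ChaseInv I M M' y := by
    clear hy
    induction hay with
    | refl => exact hinv
    | tail _ hstep ih => exact ih.of_chaseStep hM hM' hstep
  obtain ⟨b, h, hyh, hbh, hb⟩ := hinvy.exists_prefers hy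
  exact ⟨hstart, y, b, h, hay, hyh, hbh, hb⟩

theorem isPopular_of_isMaxMatchingIn_inter [Fintype A]
    (hM₁ : IsMaxMatchingIn I.firstChoiceEdges M₁) (hM : I.IsMatching M)
    (hmax : IsMaxMatchingIn I.firstChoiceEdges (M ∩ I.firstChoiceEdges))
    (hall : ∀ a, ∃ h, (a, h) ∈ M ∧ h ∈ I.firstChoices a ∪ sChoices I M₁ a) :
    IsPopular I M := by
  refine ⟨hM, fun M' hM' hmp => ?_⟩
  choose hstart y b h hay hyh hbh hb using
    fun a (ha : a ∈ {x | Prefers I M' M x}) => exists_chase_of_prefers hM₁ hM hmax hall hM' ha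
  have hinj : Function.Injective fun a : {x | Prefers I M' M x} =>
      (⟨b a a.2, hb a a.2⟩ : {x | Prefers I M M' x}) := by
    rintro ⟨a₁, ha₁⟩ ⟨a₂, ha₂⟩ heq
    obtain hb₁₂ : b a₁ ha₁ = b a₂ ha₂ := congrArg Subtype.val heq
    have hh := hM.snd_eq (hbh a₁ ha₁).1 (hb₁₂ ▸ hbh a₂ ha₂).1
    have hy := hM'.fst_eq (hyh a₁ ha₁) (hh ▸ hyh a₂ ha₂)
    exact Subtype.ext ((chaseStep_leftUnique hM hM').eq_of_reflTransGen (hay a₁ ha₁)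
      (hy ▸ hay a₂ ha₂) (hstart a₁ ha₁) (hstart a₂ ha₂))
  exact absurd (Nat.card_le_card_of_injective _ hinj) (not_le.2 hmp)

end Sufficiency

end HATInstance

open HATInstance in
theorem popular_iff_firstChoice_max_and_fs_general
    {A H : Type*} [Fintype A] (I : HATInstance A H)
    (M₁ : Set (A × H)) (hM₁ : IsMaxMatchingIn I.firstChoiceEdges M₁)
    (M : Set (A × H)) (hM : I.IsMatching M) :
    IsPopular I M ↔
      (IsMaxMatchingIn I.firstChoiceEdges (M ∩ I.firstChoiceEdges) ∧
       ∀ a : A, ∃ h : H, (a, h) ∈ M ∧ h ∈ I.firstChoices a ∪ sChoices I M₁ a) :=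
  ⟨fun hpop => ⟨hpop.isMaxMatchingIn_inter, hpop.exists_mem_firstChoices_union_sChoices hM₁⟩,
    fun ⟨hmax, hall⟩ => isPopular_of_isMaxMatchingIn_inter hM₁ hM hmax hall⟩

open HATInstance in
/-- a matching `M` of a HAT instance `G` is popular if and only if
(1) `M ∩ E₁` is a maximum matching of the first-choice graph `G₁`, and
(2) every agent `a` is matched in `M` and `M(a) ∈ f(a) ∪ s(a)`. -/
theorem popular_iff_firstChoice_max_and_fs
    {A H : Type*} [Fintype A] [Fintype H] (I : HATInstance A H)
    (M₁ : Set (A × H)) (hM₁ : IsMaxMatchingIn I.firstChoiceEdges M₁)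
    (M : Set (A × H)) (hM : I.IsMatching M) :
    IsPopular I M ↔
      (IsMaxMatchingIn I.firstChoiceEdges (M ∩ I.firstChoiceEdges) ∧
       ∀ a : A, ∃ h : H, (a, h) ∈ M ∧ h ∈ I.firstChoices a ∪ sChoices I M₁ a) :=
  popular_iff_firstChoice_max_and_fs_general I M₁ hM₁ M hM
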